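/- arXiv:1902.10286 — 5 statements merged into one kernel-verified Lean document; each statement's English description precedes it below -/
import Mathlib

section
/- In the linear-Gaussian multi-cause model, for any scaling factor c ≠ 0, the reparameterization α₁ = cα, σ²_{U,1} = σ²_U/c², β₁ = β + Σ_AA^{-1} α · γσ²_U(1 − 1/c), γ₁ = γ, σ²_{A,1} = σ²_A, with σ²_{Y,1} chosen so that the Y-variance equation holds, induces the same observable covariance matrix (Σ_AA, Σ_AY, Σ_YY) of (A, Y) as the original parameters, provided σ²_{Y,1} > 0. -/
/-!
Replacing `U` by `U / c` leaves `σ²_U ααᵀ`, hence `Σ_AA`, unchanged, while the confounding term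
`γσ²_U α` of `Σ_AY` becomes `γσ²_U α / c`. The shift of `β` by `Σ_AA⁻¹ α · γσ²_U(1 − 1/c)` adds
`Σ_AA Σ_AA⁻¹ α · γσ²_U(1 − 1/c) = γσ²_U(1 − 1/c) α` back. `Σ_YY` is matched by the choice of
`σ²_{Y,1}`.
-/

open Matrix

/-- Observable covariance of the causes: `Σ_AA = σ²_U ααᵀ + diag(σ²_A)`. -/
def SigmaAA {m : ℕ} (σU2 : ℝ) (α σA2 : Fin m → ℝ) : Matrix (Fin m) (Fin m) ℝ :=
  σU2 • Matrix.vecMulVec α α + Matrix.diagonal σA2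

/-- Observable cause–outcome covariance: `Σ_AY = Σ_AA β + γσ²_U α`. -/
def SigmaAY {m : ℕ} (σU2 : ℝ) (α σA2 β : Fin m → ℝ) (γ : ℝ) : Fin m → ℝ :=
  SigmaAA σU2 α σA2 *ᵥ β + (γ * σU2) • α

/-- Observable outcome variance:
`Σ_YY = (βᵀα + γ)²σ²_U + βᵀ diag(σ²_A) β + σ²_Y`. -/
def SigmaYY {m : ℕ} (σU2 : ℝ) (α σA2 β : Fin m → ℝ) (γ σY2 : ℝ) : ℝ :=
  (β ⬝ᵥ α + γ) ^ 2 * σU2 + β ⬝ᵥ (Matrix.diagonal σA2 *ᵥ β) + σY2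

/-- The shifted coefficient vector `β₁(c) = β + Σ_AA⁻¹ α · γσ²_U(1 − 1/c)`. -/
noncomputable def beta1 {m : ℕ} (σU2 : ℝ) (α σA2 β : Fin m → ℝ) (γ c : ℝ) : Fin m → ℝ :=
  β + (γ * σU2 * (1 - 1 / c)) • ((SigmaAA σU2 α σA2)⁻¹ *ᵥ α)

/-- The adjusted outcome-noise variance `σ²_{Y,1}`, chosen so that the
`Y`-variance equation holds. -/
noncomputable def sigmaY21 {m : ℕ} (σU2 : ℝ) (α σA2 β : Fin m → ℝ) (γ σY2 c : ℝ) : ℝ :=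
  SigmaYY σU2 α σA2 β γ σY2
    - ((beta1 σU2 α σA2 β γ c ⬝ᵥ (c • α) + γ) ^ 2 * (σU2 / c ^ 2)
        + beta1 σU2 α σA2 β γ c ⬝ᵥ (Matrix.diagonal σA2 *ᵥ beta1 σU2 α σA2 β γ c))

theorem SigmaAA_rescale {m : ℕ} (σU2 : ℝ) (α σA2 : Fin m → ℝ) {c : ℝ} (hc : c ≠ 0) :
    SigmaAA (σU2 / c ^ 2) (c • α) σA2 = SigmaAA σU2 α σA2 := by
  rw [SigmaAA, SigmaAA, smul_vecMulVec, vecMulVec_smul, smul_smul, smul_smul]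
  congr 2
  field_simp

theorem SigmaAY_add_inv_mulVec {m : ℕ} (σU2 : ℝ) (α σA2 β : Fin m → ℝ) (γ : ℝ)
    (hdet : IsUnit (SigmaAA σU2 α σA2).det) (v : Fin m → ℝ) :
    SigmaAY σU2 α σA2 (β + (SigmaAA σU2 α σA2)⁻¹ *ᵥ v) γ = SigmaAY σU2 α σA2 β γ + v := by
  rw [SigmaAY, SigmaAY, mulVec_add, mulVec_mulVec, mul_nonsing_inv _ hdet, one_mulVec]
  abel

theorem SigmaAY_rescale {m : ℕ} (σU2 : ℝ) (α σA2 β : Fin m → ℝ) (γ : ℝ) {c : ℝ} (hc : c ≠ 0) :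
    SigmaAY (σU2 / c ^ 2) (c • α) σA2 β γ
      = SigmaAY σU2 α σA2 β γ - (γ * σU2 * (1 - 1 / c)) • α := by
  rw [SigmaAY, SigmaAY, SigmaAA_rescale _ _ _ hc, add_sub_assoc, smul_smul, ← sub_smul]
  congr 2
  field_simp
  ring

theorem reparameterization_same_observable_covariance_general
    {m : ℕ} (α β σA2 : Fin m → ℝ) (γ σU2 σY2 c : ℝ) (hc : c ≠ 0)
    (hdet : IsUnit (SigmaAA σU2 α σA2).det) :
    SigmaAA (σU2 / c ^ 2) (c • α) σA2 = SigmaAA σU2 α σA2 ∧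
    SigmaAY (σU2 / c ^ 2) (c • α) σA2 (beta1 σU2 α σA2 β γ c) γ
      = SigmaAY σU2 α σA2 β γ ∧
    SigmaYY (σU2 / c ^ 2) (c • α) σA2 (beta1 σU2 α σA2 β γ c) γ
        (sigmaY21 σU2 α σA2 β γ σY2 c)
      = SigmaYY σU2 α σA2 β γ σY2 := by
  refine ⟨SigmaAA_rescale σU2 α σA2 hc, ?_, by rw [sigmaY21, SigmaYY, SigmaYY]; ring⟩
  rw [SigmaAY_rescale _ _ _ _ _ hc, beta1, ← mulVec_smul, SigmaAY_add_inv_mulVec _ _ _ _ _ hdet,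
    add_sub_cancel_right]

/-- In the linear-Gaussian multi-cause model, for any scaling factor `c ≠ 0`,
the reparameterization `α₁ = cα`, `σ²_{U,1} = σ²_U/c²`, `β₁`, `γ₁ = γ`,
`σ²_{A,1} = σ²_A`, with `σ²_{Y,1}` chosen to satisfy the `Y`-variance equation,
induces the same observable covariance matrix of `(A, Y)`, provided
`σ²_{Y,1} > 0`. -/
theorem reparameterization_same_observable_covariance
    {m : ℕ} (α β σA2 : Fin m → ℝ) (γ σU2 σY2 c : ℝ) (hc : c ≠ 0)
    (hdet : IsUnit (SigmaAA σU2 α σA2).det)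
    (hpos : 0 < sigmaY21 σU2 α σA2 β γ σY2 c) :
    SigmaAA (σU2 / c ^ 2) (c • α) σA2 = SigmaAA σU2 α σA2 ∧
    SigmaAY (σU2 / c ^ 2) (c • α) σA2 (beta1 σU2 α σA2 β γ c) γ
      = SigmaAY σU2 α σA2 β γ ∧
    SigmaYY (σU2 / c ^ 2) (c • α) σA2 (beta1 σU2 α σA2 β γ c) γ
        (sigmaY21 σU2 α σA2 β γ σY2 c)
      = SigmaYY σU2 α σA2 β γ σY2 :=
  reparameterization_same_observable_covariance_general α β σA2 γ σU2 σY2 c hc hdet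
end

section
/- In the linear-Gaussian multi-cause model with scaling factor c, if γσ²_U ≠ 0, c ≠ 1, and α ≠ 0, then the shifted coefficient vector β₁(c) = β + Σ_AA^{-1} α · γσ²_U(1 − 1/c) differs from β. Hence two distinct causal coefficient vectors induce the same observed covariance of (A, Y). -/
open Matrix

/-!
Rescaling the confounder by `c` (loading `c • α`, variance `σ²_U / c²`) leaves `Σ_AA`
unchanged and divides its contribution `γσ²_U α` to `Σ_AY` by `c`. The missing
`γσ²_U (1 − 1/c) α` is absorbed by moving `β` along `Σ_AA⁻¹ α`, which is a nonzero
direction because `Σ_AA` is invertible (it is a positive semidefinite rank-one matrix plus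
a positive diagonal) and `α ≠ 0`.
-/

section NonsingInv

variable {n K : Type*} [Fintype n] [DecidableEq n] [Field K]

theorem Matrix.mulVec_nonsing_inv_mulVec {A : Matrix n n K} (hA : IsUnit A) (v : n → K) :
    A *ᵥ (A⁻¹ *ᵥ v) = v := by
  rw [mulVec_mulVec, mul_nonsing_inv A ((isUnit_iff_isUnit_det A).mp hA), one_mulVec]

theorem Matrix.nonsing_inv_mulVec_ne_zero {A : Matrix n n K} (hA : IsUnit A) {v : n → K}
    (hv : v ≠ 0) : A⁻¹ *ᵥ v ≠ 0 := by
  intro h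
  apply hv
  rw [← mulVec_nonsing_inv_mulVec hA v, h, mulVec_zero]

end NonsingInv

theorem Matrix.posDef_smul_vecMulVec_self_add_diagonal {n : Type*} [Fintype n] [DecidableEq n]
    {s : ℝ} (hs : 0 ≤ s) (a : n → ℝ) {d : n → ℝ} (hd : ∀ i, 0 < d i) :
    (s • vecMulVec a a + diagonal d).PosDef := by
  have hrank_one : (vecMulVec a a).PosSemidef := by
    simpa using posSemidef_vecMulVec_self_star a
  exact PosDef.posSemidef_add (hrank_one.smul hs) (PosDef.diagonal hd)

section Model

variable {m : ℕ} {α β σA2 : Fin m → ℝ} {γ σU2 c : ℝ}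

theorem sigmaAA_posDef (hσA : ∀ i, 0 < σA2 i) (hσU : 0 ≤ σU2) :
    (SigmaAA σU2 α σA2).PosDef :=
  posDef_smul_vecMulVec_self_add_diagonal hσU α hσA

theorem sigmaAA_rescale (hc : c ≠ 0) :
    SigmaAA (σU2 / c ^ 2) (c • α) σA2 = SigmaAA σU2 α σA2 := by
  simp only [SigmaAA, smul_vecMulVec, vecMulVec_smul, smul_smul]
  congr 2
  field_simp

theorem beta1_ne (hS : IsUnit (SigmaAA σU2 α σA2)) (hγσ : γ * σU2 ≠ 0) (hc1 : c ≠ 1)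
    (hα : α ≠ 0) : beta1 σU2 α σA2 β γ c ≠ β := by
  have hshift : γ * σU2 * (1 - 1 / c) ≠ 0 := by
    refine mul_ne_zero hγσ (sub_ne_zero.mpr ?_)
    rwa [ne_comm, one_div, inv_ne_one]
  rw [beta1, Ne, add_eq_left]
  exact smul_ne_zero hshift (nonsing_inv_mulVec_ne_zero hS hα)

theorem sigmaAY_rescale_beta1 (hS : IsUnit (SigmaAA σU2 α σA2)) (hc : c ≠ 0) :
    SigmaAY (σU2 / c ^ 2) (c • α) σA2 (beta1 σU2 α σA2 β γ c) γ = SigmaAY σU2 α σA2 β γ := by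
  rw [SigmaAY, sigmaAA_rescale hc, beta1, mulVec_add, mulVec_smul,
    mulVec_nonsing_inv_mulVec hS, SigmaAY, add_assoc, smul_smul, ← add_smul]
  congr 2
  field_simp
  ring

end Model

/-- If `γσ²_U ≠ 0`, `c ≠ 1`, `c ≠ 0` and `α ≠ 0` (with `Σ_AA` positive
definite since all components of `σ²_A` are positive), then `β₁(c) ≠ β`,
yet both coefficient vectors induce the same observed covariance of `(A, Y)`:
two distinct causal parameter vectors are observationally equivalent. -/
theorem beta_shift_nonzero
    {m : ℕ} (α β σA2 : Fin m → ℝ) (γ σU2 c : ℝ)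
    (hσA : ∀ i, 0 < σA2 i) (hσU : 0 ≤ σU2)
    (hγσ : γ * σU2 ≠ 0) (hc1 : c ≠ 1) (hc0 : c ≠ 0) (hα : α ≠ 0) :
    beta1 σU2 α σA2 β γ c ≠ β ∧
    SigmaAA (σU2 / c ^ 2) (c • α) σA2 = SigmaAA σU2 α σA2 ∧
    SigmaAY (σU2 / c ^ 2) (c • α) σA2 (beta1 σU2 α σA2 β γ c) γ
      = SigmaAY σU2 α σA2 β γ := by
  have hS : IsUnit (SigmaAA σU2 α σA2) := (sigmaAA_posDef hσA hσU).isUnit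
  exact ⟨beta1_ne hS hγσ hc1 hα, sigmaAA_rescale hc0, sigmaAY_rescale_beta1 hS hc0⟩
end

section
/- In the asymptotic frame with α_m = (a₀/√m)·1, β_m = (b₀/√m)·1, σ²_{A,m} = s₀²·1, the ratio of the k-th component of the shift vector Δ_{β,m}(c) = Σ_AA^{-1}α_m · γσ²_U(1 − 1/c) to the k-th component of β_m equals a₀/(b₀(s₀² + σ²_U a₀²)) · γσ²_U(1 − 1/c), a quantity independent of m and of k. Hence the relative size of the ignorance region does not shrink as m → ∞. -/
open Matrix

lemma vecMulVec_mul_vecMulVec {m : ℕ} (v : Fin m → ℝ) :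
    Matrix.vecMulVec v v * Matrix.vecMulVec v v = (∑ i, v i * v i) • Matrix.vecMulVec v v := by
  ext i j
  simp [Matrix.mul_apply, Matrix.vecMulVec_apply, Finset.sum_mul, Finset.mul_sum]
  exact Finset.sum_congr rfl fun x _ => by ring

/-- In the asymptotic frame `α_m = (a₀/√m)·1`, `β_m = (b₀/√m)·1`,
`σ²_{A,m} = s₀²·1`, the ratio of the `k`-th component of the shift vector
`Δ_{β,m}(c) = Σ_AA⁻¹ α_m · γσ²_U(1 − 1/c)` to the `k`-th component of `β_m`
equals `a₀/(b₀(s₀² + σ²_U a₀²)) · γσ²_U(1 − 1/c)` — independent of `m` and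
`k`: the relative size of the ignorance region does not shrink as `m → ∞`. -/
theorem shift_ratio_constant_in_m
    (a0 b0 s0 σU2 γ c : ℝ)
    (ha0 : a0 ≠ 0) (hb0 : b0 ≠ 0) (hs0 : 0 < s0) (hσU : 0 ≤ σU2) (hc : c ≠ 0) :
    ∀ m : ℕ, 1 ≤ m → ∀ k : Fin m,
      ((γ * σU2 * (1 - 1 / c)) •
          ((σU2 • Matrix.vecMulVec (fun _ : Fin m => a0 / Real.sqrt m)
                (fun _ : Fin m => a0 / Real.sqrt m)
              + Matrix.diagonal (fun _ : Fin m => s0 ^ 2))⁻¹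
            *ᵥ (fun _ : Fin m => a0 / Real.sqrt m))) k
          / (b0 / Real.sqrt m)
        = a0 / (b0 * (s0 ^ 2 + σU2 * a0 ^ 2)) * (γ * σU2 * (1 - 1 / c)) := by
  intro m hm k
  have hmpos : (0:ℝ) < m := by exact_mod_cast hm
  have hr : Real.sqrt m ≠ 0 := by positivity
  have hrsq : Real.sqrt m * Real.sqrt m = m := Real.mul_self_sqrt hmpos.le
  set v : Fin m → ℝ := fun _ => a0 / Real.sqrt m with hv
  set P := Matrix.vecMulVec v v with hP
  have hsum : (∑ _i : Fin m, v _i * v _i) = a0 ^ 2 := by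
    simp [hv, Finset.sum_const]
    field_simp
    rw [Real.sq_sqrt hmpos.le]
  have hs2 : (s0:ℝ)^2 ≠ 0 := by positivity
  have hd : s0 ^ 2 + σU2 * a0 ^ 2 ≠ 0 := by positivity
  set d := s0 ^ 2 + σU2 * a0 ^ 2 with hdd
  set M := σU2 • P + Matrix.diagonal (fun _ : Fin m => s0 ^ 2) with hM
  set N := (s0 ^ 2)⁻¹ • (1 : Matrix (Fin m) (Fin m) ℝ) - (σU2 / (s0 ^ 2 * d)) • P with hN
  have hMN : M * N = 1 := by
    have hdiag : Matrix.diagonal (fun _ : Fin m => s0 ^ 2) = (s0 ^ 2) • (1 : Matrix (Fin m) (Fin m) ℝ) := by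
      rw [Matrix.smul_one_eq_diagonal]
    rw [hM, hN, hdiag, hP]
    simp only [mul_sub, add_mul, smul_mul_assoc, Matrix.mul_smul, Matrix.one_mul,
      Matrix.mul_one, _root_.vecMulVec_mul_vecMulVec v, hsum]
    rw [show (1 : Matrix (Fin m) (Fin m) ℝ) = (1:ℝ) • 1 + (0:ℝ) • vecMulVec v v by simp]
    match_scalars
    · field_simp
      ring
    · field_simp
  have hinv : M⁻¹ = N := Matrix.inv_eq_right_inv hMN
  have hMv : N *ᵥ v = fun _ => a0 / Real.sqrt m / d := by
    funext i
    rw [hN]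
    simp [Matrix.sub_mulVec, Matrix.smul_mulVec, hP, Matrix.mulVec, dotProduct,
      Matrix.vecMulVec_apply, hv, sub_mul, Finset.sum_sub_distrib, Matrix.one_apply,
      ite_mul, Finset.sum_ite_eq', Finset.sum_const, Finset.card_univ]
    field_simp
    linear_combination (Real.sqrt m ^ 2) * hdd + σU2 * a0 ^ 2 * hrsq
  simp only [hinv, hMv, Pi.smul_apply, smul_eq_mul]
  field_simp
end

section
/- Fix π_U ∈ (0,1). As ε → 0, for a table with π_{U|a} = ε < min{π_{Y|a}, 1−π_{Y|a}}, the Fréchet bounds force p_{11|a} ∈ [0, ε], and the conditional probability P(Y=1 | U=1, A=a) = p_{11|a}/ε can take any value in [0,1]. Consequently, the limiting ignorance region for π_{Y|do(a)} = (1−π_U)·p_{01|a}/(1−ε) + π_U·p_{11|a}/ε is the interval (1−π_U)·π_{Y|a} + [0, π_U], which has width π_U. -/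
/-- When `π_{U|a} = ε` is small (`ε < min{π_{Y|a}, 1 − π_{Y|a}}`), the Fréchet
bounds force `p_{11|a} ∈ [0, ε]`, the conditional probability
`P(Y=1 | U=1, A=a) = p_{11|a}/ε` can take any value in `[0,1]`, and the
limiting ignorance region for
`π_{Y|do(a)} = (1−π_U)·p_{01|a}/(1−ε) + π_U·p_{11|a}/ε` (with
`p_{01|a} = π_{Y|a} − p_{11|a}`) is `(1−π_U)·π_{Y|a} + [0, π_U]`,
of width `π_U`. -/
theorem limiting_ignorance_region_width
    (πU πYa : ℝ) (hπU : πU ∈ Set.Ioo (0 : ℝ) 1)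
    (hπYa : πYa ∈ Set.Ioo (0 : ℝ) 1) :
    -- Fréchet bounds reduce to [0, ε]
    (∀ ε : ℝ, 0 < ε → ε < min πYa (1 - πYa) →
      max 0 (ε + πYa - 1) = 0 ∧ min ε πYa = ε) ∧
    -- P(Y=1 | U=1, A=a) = p11/ε can take any value in [0,1]
    (∀ ε : ℝ, 0 < ε → ε < min πYa (1 - πYa) →
      ∀ v ∈ Set.Icc (0 : ℝ) 1, ∃ p11 ∈ Set.Icc 0 ε, p11 / ε = v) ∧
    -- limiting ignorance region is (1−πU)·πYa + [0, πU]
    (∀ t ∈ Set.Icc (0 : ℝ) πU, ∀ δ : ℝ, 0 < δ →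
      ∃ ε0 : ℝ, 0 < ε0 ∧
        ∀ ε : ℝ, 0 < ε → ε < ε0 → ε < min πYa (1 - πYa) →
          ∃ p11 ∈ Set.Icc 0 ε,
            |((1 - πU) * (πYa - p11) / (1 - ε) + πU * p11 / ε)
              - ((1 - πU) * πYa + t)| < δ) := by
  obtain ⟨hU0, hU1⟩ := hπU
  obtain ⟨hY0, hY1⟩ := hπYa
  refine ⟨?_, ?_, ?_⟩
  · intro ε hε hεm
    rw [lt_min_iff] at hεm
    constructor
    · rw [max_eq_left]; linarith [hεm.2]
    · exact min_eq_left (le_of_lt hεm.1)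
  · intro ε hε _ v ⟨hv0, hv1⟩
    refine ⟨ε * v, ⟨by positivity, by nlinarith⟩, ?_⟩
    field_simp
  · intro t ⟨ht0, htU⟩ δ hδ
    refine ⟨min (δ / 4) (1 / 2), by positivity, ?_⟩
    intro ε hε hεlt _
    rw [lt_min_iff] at hεlt
    have hc0 : 0 ≤ t / πU := by positivity
    have hc1 : t / πU ≤ 1 := by rw [div_le_one hU0]; exact htU
    refine ⟨ε * (t / πU), ⟨by positivity, by nlinarith⟩, ?_⟩
    have h1ε : (0:ℝ) < 1 - ε := by linarith [hεlt.2]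
    have hexp : (1 - πU) * (πYa - ε * (t / πU)) / (1 - ε) + πU * (ε * (t / πU)) / ε
        - ((1 - πU) * πYa + t) = (1 - πU) * ε * (πYa - t / πU) / (1 - ε) := by
      field_simp
      ring
    rw [hexp, abs_div, abs_of_pos h1ε, div_lt_iff₀ h1ε]
    have hb : |(1 - πU) * ε * (πYa - t / πU)| ≤ ε := by
      rw [abs_mul, abs_mul]
      have h1 : |1 - πU| ≤ 1 := by rw [abs_of_pos (by linarith)]; linarith
      have h2 : |πYa - t / πU| ≤ 1 := by
        rw [abs_le]; constructor <;> [linarith; linarith]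
      calc |1 - πU| * |ε| * |πYa - t / πU| ≤ 1 * |ε| * 1 := by
            apply mul_le_mul (mul_le_mul h1 le_rfl (abs_nonneg _) zero_le_one) h2
              (abs_nonneg _) (by positivity)
        _ = ε := by rw [one_mul, mul_one, abs_of_pos hε]
    nlinarith [hεlt.1, hεlt.2]
end

section
/- Suppose U has finite non-degenerate support, and for each m, conditional on U = u, the components of A_m = (A^(1),...,A^(m)) are i.i.d. with a distribution depending non-trivially on u, and a consistent estimator Û(A_m) of U exists. Then for any fixed value a_m with Û(a_m) = u, the conditional probability P(Y | U = u', A_m = a_m) for u' ≠ u is not identified from the joint distribution of (A_m, Y) in the limit m → ∞: any value of this conditional probability is consistent with the limiting observed-data distribution. -/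
/-!
Change the outcome model only at the single point `(u', a_m)`. The observable law of `(A_m, Y)`
then moves by at most `P(U = u') · P(A_m = a_m | U = u')`, and since `Û(a_m) = u ≠ u'` this is
bounded by `P(U = u')` times the probability that `Û` misclassifies `U = u'`, which vanishes by
consistency.
-/

open Finset Filter Function

section PointUpdate

variable {ι β : Type*} [DecidableEq ι] [DecidableEq β]

lemma update_update_mem {S : Set ℝ} {f : ι → β → ℝ} (hf : ∀ v a, f v a ∈ S)
    (v₀ : ι) (a₀ : β) {t : ℝ} (ht : t ∈ S) (v : ι) (a : β) :
    update f v₀ (update (f v₀) a₀ t) v a ∈ S := by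
  rcases eq_or_ne v v₀ with rfl | hv
  · rcases eq_or_ne a a₀ with rfl | ha
    · simpa using ht
    · simpa [ha] using hf v a
  · simpa [hv] using hf v a

variable [Fintype ι] [Fintype β]

lemma sum_abs_mixture_update_sub (w f : ι → β → ℝ) (hw : ∀ v a, 0 ≤ w v a)
    (v₀ : ι) (a₀ : β) (t : ℝ) :
    ∑ a, |∑ v, w v a * update f v₀ (update (f v₀) a₀ t) v a - ∑ v, w v a * f v a|
      = w v₀ a₀ * |t - f v₀ a₀| := by
  have hrow : ∀ a, ∑ v, w v a * update f v₀ (update (f v₀) a₀ t) v a - ∑ v, w v a * f v a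
      = if a = a₀ then w v₀ a₀ * (t - f v₀ a₀) else 0 := by
    intro a
    rw [← sum_sub_distrib, sum_eq_single v₀]
    · split_ifs with ha
      · subst ha; simp [mul_sub]
      · simp [ha]
    · intro v _ hv
      simp [hv]
    · simp
  simp only [hrow, apply_ite abs, abs_zero, sum_ite_eq', mem_univ, if_true, abs_mul,
    abs_of_nonneg (hw v₀ a₀)]

end PointUpdate

theorem conditional_outcome_not_identified_in_limit_general
    {ι : Type*} [Fintype ι] [DecidableEq ι] (α : ℕ → Type*) [∀ m, Fintype (α m)]
    (pU : ι → ℝ) (hpU : ∀ u, 0 < pU u)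
    (u u' : ι) (huu' : u' ≠ u)
    (k : ∀ m, ι → α m → ℝ)
    (hknn : ∀ m v a, 0 ≤ k m v a)
    (Uhat : ∀ m, α m → ι)
    (hcons : ∀ v : ι,
      Tendsto (fun m => ∑ a ∈ Finset.univ.filter (fun a => Uhat m a ≠ v), k m v a)
        atTop (nhds 0))
    (pY : ∀ m, ι → α m → ℝ) (hpY : ∀ m v a, pY m v a ∈ Set.Icc (0 : ℝ) 1)
    (am : ∀ m, α m) (ham : ∀ m, Uhat m (am m) = u)
    (t : ℝ) (ht : t ∈ Set.Icc (0 : ℝ) 1) :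
    ∃ pY' : ∀ m, ι → α m → ℝ,
      (∀ m v a, pY' m v a ∈ Set.Icc (0 : ℝ) 1) ∧
      (∀ m, pY' m u' (am m) = t) ∧
      Tendsto
        (fun m => ∑ a : α m,
          |(∑ v, pU v * k m v a * pY' m v a) - (∑ v, pU v * k m v a * pY m v a)|)
        atTop (nhds 0) := by
  classical
  have hw : ∀ m v a, 0 ≤ pU v * k m v a := fun m v a => mul_nonneg (hpU v).le (hknn m v a)
  refine ⟨fun m => update (pY m) u' (update (pY m u') (am m) t),
    fun m => update_update_mem (hpY m) u' (am m) ht, fun m => by simp, ?_⟩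
  simp only [sum_abs_mixture_update_sub (fun v a => pU v * k _ v a) _ (hw _)]
  have hmass : ∀ m, k m u' (am m) ≤ ∑ a ∈ univ.filter (fun a => Uhat m a ≠ u'), k m u' a :=
    fun m => single_le_sum (fun a _ => hknn m u' a) (by simp [ham m, huu'.symm])
  have hgap : ∀ m, |t - pY m u' (am m)| ≤ 1 := fun m =>
    abs_sub_le_of_nonneg_of_le ht.1 ht.2 (hpY m u' (am m)).1 (hpY m u' (am m)).2
  refine squeeze_zero (fun m => mul_nonneg (hw m u' (am m)) (abs_nonneg _)) (fun m => ?_)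
    (by simpa using (hcons u').const_mul (pU u'))
  calc pU u' * k m u' (am m) * |t - pY m u' (am m)|
      ≤ pU u' * k m u' (am m) := mul_le_of_le_one_right (hw m u' (am m)) (hgap m)
    _ ≤ pU u' * ∑ a ∈ univ.filter (fun a => Uhat m a ≠ u'), k m u' a :=
        mul_le_mul_of_nonneg_left (hmass m) (hpU u').le

/-- Non-identification under degeneracy: in the discrete multi-cause model
with latent `U` (law `pU`), conditional cause law `k m u ·` and conditional
outcome probabilities `pY m u a = P(Y=1 | U=u, A=a)`, suppose a consistent
estimator `Û_m` exists (the conditional probability of misclassification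
vanishes). Then for any sequence of cause values `a_m` with `Û_m(a_m) = u`,
any `u' ≠ u` and any `t ∈ [0,1]`, there is an alternative outcome model
taking the value `t` at `(u', a_m)` whose implied observable law of `(A, Y)`
agrees with the true one in the limit `m → ∞`: the conditional probability
`P(Y | U = u', A_m = a_m)` is not identified in the limit. -/
theorem conditional_outcome_not_identified_in_limit
    {ι : Type*} [Fintype ι] [DecidableEq ι] (α : ℕ → Type*) [∀ m, Fintype (α m)]
    (pU : ι → ℝ) (hpU : ∀ u, 0 < pU u) (hpUsum : ∑ u, pU u = 1)
    (u u' : ι) (huu' : u' ≠ u)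
    (k : ∀ m, ι → α m → ℝ)
    (hknn : ∀ m v a, 0 ≤ k m v a) (hksum : ∀ m v, ∑ a, k m v a = 1)
    (Uhat : ∀ m, α m → ι)
    (hcons : ∀ v : ι,
      Tendsto (fun m => ∑ a ∈ Finset.univ.filter (fun a => Uhat m a ≠ v), k m v a)
        atTop (nhds 0))
    (pY : ∀ m, ι → α m → ℝ) (hpY : ∀ m v a, pY m v a ∈ Set.Icc (0 : ℝ) 1)
    (am : ∀ m, α m) (ham : ∀ m, Uhat m (am m) = u)
    (t : ℝ) (ht : t ∈ Set.Icc (0 : ℝ) 1) :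
    ∃ pY' : ∀ m, ι → α m → ℝ,
      (∀ m v a, pY' m v a ∈ Set.Icc (0 : ℝ) 1) ∧
      (∀ m, pY' m u' (am m) = t) ∧
      Tendsto
        (fun m => ∑ a : α m,
          |(∑ v, pU v * k m v a * pY' m v a) - (∑ v, pU v * k m v a * pY m v a)|)
        atTop (nhds 0) :=
  conditional_outcome_not_identified_in_limit_general α pU hpU u u' huu' k hknn Uhat hcons pY hpY am
    ham t ht
end
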